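/- Let X, Y be finite metric spaces, R an optimal correspondence, and for α, α' ∈ [0,1] equip R with metrics d_α and d_{α'} given by d_α((x,y),(x',y')) = α·d_X(x,x') + (1-α)·d_Y(y,y'). Then d_GH((R,d_α),(R,d_{α'})) ≤ |α − α'|·d_GH(X,Y), and combined with the triangle inequality through X and Y, equality holds: d_GH((R,d_α),(R,d_{α'})) = |α − α'|·d_GH(X,Y). -/

import Mathlib

/-!
The identity of `R` is a correspondence between `(R, d_α)` and `(R, d_{α'})` whose distortion is
`|α - α'|` times that of `R`, and the projections of `(R, d_α)` to `X` and `Y` have distortion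
`1 - α` and `α` times that of `R`; since `R` is optimal, these give
`d_GH(R_α, R_{α'}) ≤ |α - α'| d_GH(X, Y)`, `d_GH(R_α, X) ≤ (1 - α) d_GH(X, Y)` and
`d_GH(R_α, Y) ≤ α d_GH(X, Y)`. The triangle inequality along `X, R_α, R_{α'}, Y` and along
`X, R_{α'}, R_α, Y` then forces equality in the first bound.
-/

open GromovHausdorff Metric Filter Topology

def IsCorrespondence {X Y : Type*} (R : Set (X × Y)) : Prop :=
  (∀ x : X, ∃ y : Y, (x, y) ∈ R) ∧ (∀ y : Y, ∃ x : X, (x, y) ∈ R)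

noncomputable def corrDis {X Y : Type*} [MetricSpace X] [MetricSpace Y]
    (R : Set (X × Y)) : ℝ :=
  sSup {r : ℝ | ∃ p ∈ R, ∃ q ∈ R, r = |dist p.1 q.1 - dist p.2 q.2|}

theorem IsCorrespondence.surjective_fst {X Y : Type*} {R : Set (X × Y)} (hR : IsCorrespondence R) :
    Function.Surjective fun p : R => p.1.1 := fun x =>
  let ⟨y, hy⟩ := hR.1 x
  ⟨⟨(x, y), hy⟩, rfl⟩

theorem IsCorrespondence.surjective_snd {X Y : Type*} {R : Set (X × Y)} (hR : IsCorrespondence R) :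
    Function.Surjective fun p : R => p.1.2 := fun y =>
  let ⟨x, hx⟩ := hR.2 y
  ⟨⟨(x, y), hx⟩, rfl⟩

theorem abs_dist_sub_dist_le_corrDis {X Y : Type*} [MetricSpace X] [MetricSpace Y]
    [Finite X] [Finite Y] {R : Set (X × Y)} {p q : X × Y} (hp : p ∈ R) (hq : q ∈ R) :
    |dist p.1 q.1 - dist p.2 q.2| ≤ corrDis R := by
  have hfin : {r : ℝ | ∃ p ∈ R, ∃ q ∈ R, r = |dist p.1 q.1 - dist p.2 q.2|}.Finite :=
    (Set.finite_range fun pq : (X × Y) × (X × Y) => |dist pq.1.1 pq.2.1 - dist pq.1.2 pq.2.2|).subset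
      (by rintro r ⟨p, -, q, -, rfl⟩; exact ⟨(p, q), rfl⟩)
  exact le_csSup hfin.bddAbove ⟨p, hp, q, hq, rfl⟩

theorem ghDist_le_of_surjective {Z W : Type*} [MetricSpace Z] [CompactSpace Z] [Nonempty Z]
    [MetricSpace W] [CompactSpace W] [Nonempty W] {Φ : Z → W} (hΦ : Function.Surjective Φ)
    {ε : ℝ} (H : ∀ p q : Z, |dist p q - dist (Φ p) (Φ q)| ≤ 2 * ε) : ghDist Z W ≤ ε := by
  have := ghDist_le_of_approx_subsets (s := Set.univ) (fun p => Φ p) (ε₁ := 0) (ε₂ := 2 * ε)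
    (ε₃ := 0) (fun p => ⟨p, trivial, by simp⟩)
    (fun w => let ⟨p, hp⟩ := hΦ w; ⟨⟨p, trivial⟩, by simp [hp]⟩) (fun p q => H p q)
  linarith

section Weighted

variable {X Y Z W : Type*} [MetricSpace X] [MetricSpace Y]
  [mZ : MetricSpace Z] [CompactSpace Z] [Nonempty Z]
  [mW : MetricSpace W] [CompactSpace W] [Nonempty W]
  {f : Z → X} {g : Z → Y} {δ : ℝ}

theorem ghDist_le_of_weighted_dist
    (hfg : ∀ p q : Z, |dist (f p) (f q) - dist (g p) (g q)| ≤ 2 * δ)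
    {Φ : Z → W} (hΦ : Function.Surjective Φ) {β β' : ℝ}
    (hZ : ∀ p q : Z, dist p q = β * dist (f p) (f q) + (1 - β) * dist (g p) (g q))
    (hW : ∀ p q : Z, dist (Φ p) (Φ q) = β' * dist (f p) (f q) + (1 - β') * dist (g p) (g q)) :
    ghDist Z W ≤ |β - β'| * δ := by
  refine ghDist_le_of_surjective hΦ fun p q => ?_
  calc |dist p q - dist (Φ p) (Φ q)| = |β - β'| * |dist (f p) (f q) - dist (g p) (g q)| := by
        rw [hZ, hW, ← abs_mul]; ring_nf
    _ ≤ |β - β'| * (2 * δ) := by gcongr; exact hfg p q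
    _ = 2 * (|β - β'| * δ) := by ring

theorem ghDist_le_of_weighted_dist_fst [CompactSpace X] [Nonempty X]
    (hfg : ∀ p q : Z, |dist (f p) (f q) - dist (g p) (g q)| ≤ 2 * δ)
    (hf : Function.Surjective f) {β : ℝ} (hβ : β ≤ 1)
    (hZ : ∀ p q : Z, dist p q = β * dist (f p) (f q) + (1 - β) * dist (g p) (g q)) :
    ghDist Z X ≤ (1 - β) * δ := by
  have := ghDist_le_of_weighted_dist hfg hf hZ (β' := 1) fun p q => by ring
  rwa [abs_of_nonpos (by linarith), neg_sub] at this

theorem ghDist_le_of_weighted_dist_snd [CompactSpace Y] [Nonempty Y]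
    (hfg : ∀ p q : Z, |dist (f p) (f q) - dist (g p) (g q)| ≤ 2 * δ)
    (hg : Function.Surjective g) {β : ℝ} (hβ : 0 ≤ β)
    (hZ : ∀ p q : Z, dist p q = β * dist (f p) (f q) + (1 - β) * dist (g p) (g q)) :
    ghDist Z Y ≤ β * δ := by
  have := ghDist_le_of_weighted_dist hfg hg hZ (β' := 0) fun p q => by ring
  rwa [sub_zero, abs_of_nonneg hβ] at this

end Weighted

theorem abs_sub_mul_dist_le_dist {M : Type*} [PseudoMetricSpace M] {x y a b : M} {α α' : ℝ}
    (hax : dist a x ≤ (1 - α) * dist x y) (hay : dist a y ≤ α * dist x y)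
    (hbx : dist b x ≤ (1 - α') * dist x y) (hby : dist b y ≤ α' * dist x y) :
    |α - α'| * dist x y ≤ dist a b := by
  rw [← abs_of_nonneg (dist_nonneg (x := x) (y := y)), ← abs_mul]
  exact abs_le.2
    ⟨by linarith [dist_triangle4 x b a y, dist_comm x b, dist_comm a b],
      by linarith [dist_triangle4 x a b y, dist_comm x a]⟩

theorem stmt19 {X Y : Type*} [MetricSpace X] [MetricSpace Y]
    [Fintype X] [Fintype Y] [Nonempty X] [Nonempty Y]
    (R : Set (X × Y)) (hR : IsCorrespondence R) [Nonempty ↥R]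
    (hopt : ghDist X Y = (1 / 2) * corrDis R)
    (α α' : ℝ) (hα : α ∈ Set.Icc (0 : ℝ) 1) (hα' : α' ∈ Set.Icc (0 : ℝ) 1)
    (dR dR' : MetricSpace ↥R)
    (hdist : ∀ p q : ↥R, @dist _ dR.toDist p q =
      α * dist (p : X × Y).1 (q : X × Y).1 + (1 - α) * dist (p : X × Y).2 (q : X × Y).2)
    (hdist' : ∀ p q : ↥R, @dist _ dR'.toDist p q =
      α' * dist (p : X × Y).1 (q : X × Y).1 + (1 - α') * dist (p : X × Y).2 (q : X × Y).2) :
    @ghDist ↥R ↥R dR ‹_›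
        (@Finite.compactSpace ↥R dR.toUniformSpace.toTopologicalSpace _) dR' ‹_›
        (@Finite.compactSpace ↥R dR'.toUniformSpace.toTopologicalSpace _) =
      |α - α'| * ghDist X Y := by
  have hdis : ∀ p q : R, |dist p.1.1 q.1.1 - dist p.1.2 q.1.2| ≤ 2 * ghDist X Y := fun p q => by
    rw [hopt]; linarith [abs_dist_sub_dist_le_corrDis p.2 q.2]
  refine le_antisymm ?_ ?_
  · exact ghDist_le_of_weighted_dist (mZ := dR) (mW := dR') hdis Function.surjective_id hdist hdist'
  · exact abs_sub_mul_dist_le_dist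
      (ghDist_le_of_weighted_dist_fst (mZ := dR) hdis hR.surjective_fst hα.2 hdist)
      (ghDist_le_of_weighted_dist_snd (mZ := dR) hdis hR.surjective_snd hα.1 hdist)
      (ghDist_le_of_weighted_dist_fst (mZ := dR') hdis hR.surjective_fst hα'.2 hdist')
      (ghDist_le_of_weighted_dist_snd (mZ := dR') hdis hR.surjective_snd hα'.1 hdist')
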